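/- arXiv:1507.05080 — 5 statements merged into one kernel-verified Lean document; each statement's English description precedes it below -/
import Mathlib

section
/- Let v_1,...,v_r ∈ ℤ^n be linearly independent and let Λ = {x ∈ ℤ^n : x·v_1 = ... = x·v_r = 0}. Let D be the largest positive integer such that every r×r minor of the n×r matrix with columns v_1,...,v_r is divisible by D, and let W be the Euclidean norm of the vector of all r×r minors (the exterior product). Then det(Λ) = W / D. -/
/-!
Write `V` and `Z` for the integer matrices with rows `v i` and `z j`, so that `V * Zᵀ = 0`, and
let `A` be the square matrix with rows `[V; Z]`. For an `r`-set `s` of columns, multiplying `A`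
by the transpose of `[V; (e_t)_(t ∉ s)]` gives a block triangular matrix, whence the
complementary minor identity `|det A| * |V_s| = det (V * Vᵀ) * |Z_sᶜ|`. Since `Λ` is saturated,
the maximal minors of its basis `Z` have gcd `1`: a prime dividing all of them would make the rows
of `Z` dependent mod `p`. Taking gcds over `s` gives `|det A| * D = det (V * Vᵀ)`; together with
`det A ^ 2 = det (V * Vᵀ) * det (Z * Zᵀ)` this yields `det (V * Vᵀ) = D ^ 2 * det (Z * Zᵀ)`,
and `det (V * Vᵀ) = W ^ 2` by Cauchy–Binet.
-/

open Matrix Finset Submodule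

theorem Finset.gcd_natAbs_eq_of_isGreatest {κ : Type*} [Fintype κ] {f : κ → ℤ} {D : ℕ}
    (hD : IsGreatest {d : ℕ | 0 < d ∧ ∀ i, (d : ℤ) ∣ f i} D) :
    univ.gcd (fun i => (f i).natAbs) = D := by
  have hDg : D ∣ univ.gcd (fun i => (f i).natAbs) :=
    dvd_gcd fun i _ => Int.natCast_dvd.mp (hD.1.2 i)
  have hg : 0 < univ.gcd (fun i => (f i).natAbs) := by
    refine Nat.pos_of_ne_zero fun h0 => ?_
    have hf : ∀ i, f i = 0 := fun i => by simpa using gcd_eq_zero_iff.mp h0 i (mem_univ i)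
    have := hD.2 ⟨D.succ_pos, fun i => by simp [hf i]⟩
    omega
  exact le_antisymm (hD.2 ⟨hg, fun i => Int.natCast_dvd.mpr (gcd_dvd (mem_univ i))⟩)
    (Nat.le_of_dvd hg hDg)

theorem Finset.gcd_natAbs_subtype_eq_of_isGreatest {α : Type*} {p : α → Prop}
    [Fintype (Subtype p)] {f : α → ℤ} {D : ℕ} (hf : ∀ a, ¬ p a → f a = 0)
    (hD : IsGreatest {d : ℕ | 0 < d ∧ ∀ a, (d : ℤ) ∣ f a} D) :
    univ.gcd (fun a : Subtype p => (f a).natAbs) = D := by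
  refine gcd_natAbs_eq_of_isGreatest ?_
  convert hD using 4 with d
  refine ⟨fun h a => ?_, fun h a => h a⟩
  by_cases ha : p a
  · exact h ⟨a, ha⟩
  · simp [hf a ha]

section OrderEmbOfFin

variable {ι : Type*} [Fintype ι] [LinearOrder ι] {k r : ℕ}

theorem Finset.sum_injective_eq_sum_orderEmbOfFin_comp_perm {M : Type*} [AddCommMonoid M]
    (g : (Fin k → ι) → M) :
    ∑ f ∈ univ.filter Function.Injective, g f =
      ∑ s : {s : Finset ι // s.card = k}, ∑ σ : Equiv.Perm (Fin k),
        g (s.1.orderEmbOfFin s.2 ∘ σ) := by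
  classical
  rw [← Fintype.sum_prod_type']
  symm
  refine sum_bij (fun p _ => p.1.1.orderEmbOfFin p.1.2 ∘ p.2) ?_ ?_ ?_ (fun _ _ => rfl)
  · intro p _
    simpa using (p.1.1.orderEmbOfFin p.1.2).injective.comp p.2.injective
  · rintro ⟨⟨s, hs⟩, σ⟩ - ⟨⟨t, ht⟩, τ⟩ - h
    have hst : s = t := by simpa [Set.range_comp] using congrArg Set.range h
    subst hst
    simp only [Prod.mk.injEq, true_and]
    exact Equiv.ext fun i => (s.orderEmbOfFin hs).injective (congrFun h i)
  · intro f hf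
    have hf : Function.Injective f := by simpa using hf
    have hcard : (univ.image f).card = k := by
      rw [card_image_of_injective _ hf, card_univ, Fintype.card_fin]
    have hmem : ∀ i, f i ∈ Set.range ((univ.image f).orderEmbOfFin hcard) := by simp
    choose g hg using hmem
    have hginj : Function.Injective g := fun i j hij => hf (by rw [← hg i, ← hg j, hij])
    exact ⟨(⟨univ.image f, hcard⟩, Equiv.ofBijective g hginj.bijective_of_finite), mem_univ _,
      funext hg⟩

theorem Finset.exists_sumEquiv_orderEmbOfFin_compl (s : Finset ι) (hs : s.card = r)
    (hc : sᶜ.card = k) :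
    ∃ σ : Fin r ⊕ Fin k ≃ ι,
      σ ∘ Sum.inl = s.orderEmbOfFin hs ∧ σ ∘ Sum.inr = sᶜ.orderEmbOfFin hc :=
  ⟨(Equiv.sumCongr (s.orderIsoOfFin hs).toEquiv ((sᶜ.orderIsoOfFin hc).toEquiv.trans
      (Equiv.subtypeEquivRight fun _ => mem_compl))).trans (Equiv.sumCompl (· ∈ s)),
    by ext; simp, by ext; simp⟩

end OrderEmbOfFin

namespace Matrix

variable {R : Type*} [CommRing R] {ι : Type*} {k r : ℕ}

section Submatrix

variable {κ : Type*} [Fintype κ] [DecidableEq κ]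

theorem natAbs_det_submatrix_id_equiv (Y : Matrix κ ι ℤ) (e σ : κ ≃ ι) :
    (Y.submatrix id e).det.natAbs = (Y.submatrix id σ).det.natAbs := by
  have : Y.submatrix id e = (Y.submatrix id σ).submatrix id (e.trans σ.symm) := by
    ext
    simp
  rw [this, det_permute', Int.natAbs_mul, Int.cast_id, Int.units_natAbs, one_mul]

variable [Fintype ι]

theorem det_mul_eq_sum_prod_mul_det_submatrix (A : Matrix κ ι R) (B : Matrix ι κ R) :
    (A * B).det = ∑ f : κ → ι, (∏ i, A i (f i)) * (B.submatrix f id).det := by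
  let F := (detRowAlternating (R := R) (n := κ)).toMultilinearMap
  have hrows : (A * B).det = F fun i => ∑ j, A i j • B j := by
    change F (A * B) = _
    congr 1
    ext i l
    simp [mul_apply, Finset.sum_apply]
  rw [hrows, F.map_sum]
  exact sum_congr rfl fun f _ => (F.map_smul_univ _ _).trans (smul_eq_mul _ _)

theorem det_submatrix_mul_det_submatrix (X Y : Matrix κ ι R) (e : κ ≃ ι) :
    (X.submatrix id e).det * (Y.submatrix id e).det = (X * Yᵀ).det := by
  rw [← det_transpose (Y.submatrix id e), ← det_mul, transpose_submatrix, submatrix_mul_equiv,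
    submatrix_id_id]

end Submatrix

section OrthogonalRows

variable {V : Matrix (Fin r) ι R} {Z : Matrix (Fin k) ι R}

theorem mul_transpose_eq_zero_of_span_le_ker [Fintype ι]
    (h : span R (Set.range Z.row) ≤ LinearMap.ker V.mulVecLin) : V * Zᵀ = 0 := by
  ext i j
  simpa [mulVec, dotProduct, mul_apply, mul_comm] using
    congrFun (LinearMap.mem_ker.mp (h (subset_span (Set.mem_range_self j)))) i

theorem det_fromRows_submatrix_sq [Fintype ι] (hVZ : V * Zᵀ = 0) (e : Fin r ⊕ Fin k ≃ ι) :
    ((fromRows V Z).submatrix id e).det ^ 2 = (V * Vᵀ).det * (Z * Zᵀ).det := by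
  have hZV : Z * Vᵀ = 0 := by simpa using congrArg transpose hVZ
  rw [sq, det_submatrix_mul_det_submatrix, transpose_fromRows, fromRows_mul_fromCols, hVZ, hZV,
    det_fromBlocks_zero₂₁]

variable [DecidableEq ι]

theorem det_fromRows_mul_det_fromRows_one_submatrix [Fintype ι] (hVZ : V * Zᵀ = 0)
    (e : Fin r ⊕ Fin k ≃ ι) (c : Fin k → ι) :
    ((fromRows V Z).submatrix id e).det *
      ((fromRows V ((1 : Matrix ι ι R).submatrix c id)).submatrix id e).det =
      (V * Vᵀ).det * (Z.submatrix id c).det := by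
  have hZV : Z * Vᵀ = 0 := by simpa using congrArg transpose hVZ
  rw [det_submatrix_mul_det_submatrix, transpose_fromRows, fromRows_mul_fromCols, hZV,
    det_fromBlocks_zero₂₁, transpose_submatrix, transpose_one, ← Equiv.coe_refl,
    mul_submatrix_one]
  rfl

theorem det_fromRows_one_submatrix_inr (σ : Fin r ⊕ Fin k ≃ ι) :
    ((fromRows V ((1 : Matrix ι ι R).submatrix (σ ∘ Sum.inr) id)).submatrix id σ).det =
      (V.submatrix id (σ ∘ Sum.inl)).det := by
  have : (fromRows V ((1 : Matrix ι ι R).submatrix (σ ∘ Sum.inr) id)).submatrix id σ =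
      fromBlocks (V.submatrix id (σ ∘ Sum.inl)) (V.submatrix id (σ ∘ Sum.inr)) 0 1 := by
    ext (i | i) (j | j) <;> simp [one_apply]
  rw [this, det_fromBlocks_zero₂₁, det_one, mul_one]

end OrthogonalRows

theorem linearIndependent_row_map_zmod (p : ℕ) [hp : Fact p.Prime] {Z : Matrix (Fin k) ι ℤ}
    (hZ : LinearIndependent ℤ Z.row)
    (hsat : (span ℤ (Set.range Z.row)).toAddSubmonoid.NSMulSaturated) :
    LinearIndependent (ZMod p) (Z.map (Int.cast : ℤ → ZMod p)).row := by
  rw [Fintype.linearIndependent_iff]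
  intro g hg i
  set a : Fin k → ℤ := fun i => (g i).val
  have ha : ∀ i, (a i : ZMod p) = g i := fun i => by simp [a]
  have hdvd : ∀ t, (p : ℤ) ∣ ∑ i, a i * Z i t := by
    intro t
    rw [← ZMod.intCast_zmod_eq_zero_iff_dvd]
    simpa [ha, Finset.sum_apply, row] using congrFun hg t
  choose x hx using hdvd
  have hpx : p • x = ∑ i, a i • Z.row i := by
    ext t
    simp [hx, Finset.sum_apply, row]
  have hxmem : x ∈ span ℤ (Set.range Z.row) := by
    refine (hsat (n := p) ?_).resolve_left hp.out.ne_zero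
    rw [mem_toAddSubmonoid, hpx]
    exact sum_mem fun i _ => smul_mem _ _ (subset_span ⟨i, rfl⟩)
  obtain ⟨c, hc⟩ := (mem_span_range_iff_exists_fun ℤ).mp hxmem
  have hac := Fintype.linearIndependent_iff.mp hZ (fun i => a i - p * c i) (by
    simp only [sub_smul, sum_sub_distrib, mul_smul, ← smul_sum, hc, natCast_zsmul, ← hpx,
      sub_self])
  rw [← ha, sub_eq_zero.mp (hac i)]
  simp

section MaxMinor

variable [LinearOrder ι]

def maxMinor (A : Matrix (Fin k) ι R) (s : {s : Finset ι // s.card = k}) : R :=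
  (A.submatrix id (s.1.orderEmbOfFin s.2)).det

theorem map_maxMinor {S : Type*} [CommRing S] (f : R →+* S) (A : Matrix (Fin k) ι R) (s) :
    (A.map f).maxMinor s = f (A.maxMinor s) := by
  rw [maxMinor, maxMinor, RingHom.map_det]
  rfl

variable [Fintype ι]

theorem det_mul_eq_sum_maxMinor_mul_maxMinor (A : Matrix (Fin k) ι R) (B : Matrix ι (Fin k) R) :
    (A * B).det = ∑ s, A.maxMinor s * Bᵀ.maxMinor s := by
  classical
  rw [det_mul_eq_sum_prod_mul_det_submatrix, ← sum_filter_of_ne (p := Function.Injective),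
    sum_injective_eq_sum_orderEmbOfFin_comp_perm]
  · refine Fintype.sum_congr _ _ fun s => ?_
    set e := s.1.orderEmbOfFin s.2
    have hA : A.maxMinor s =
        ∑ σ : Equiv.Perm (Fin k), Equiv.Perm.sign σ * ∏ i, A i (e (σ i)) := by
      rw [maxMinor, ← det_transpose, det_apply']
      rfl
    have hB : ∀ σ : Equiv.Perm (Fin k),
        (B.submatrix (e ∘ σ) id).det = Equiv.Perm.sign σ * Bᵀ.maxMinor s := fun σ => by
      rw [maxMinor, ← transpose_submatrix, det_transpose, ← det_permute]
      rfl
    simp only [hA, hB, sum_mul]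
    exact Fintype.sum_congr _ _ fun σ => by simp only [Function.comp_apply]; ring
  · intro f _ hf₀
    by_contra hf
    obtain ⟨i, j, hij, hne⟩ := Function.not_injective_iff.mp hf
    exact hf₀ (by rw [det_zero_of_row_eq hne (by ext; simp [hij]), mul_zero])

theorem det_mul_transpose_eq_sum_maxMinor_sq (A : Matrix (Fin k) ι R) :
    (A * Aᵀ).det = ∑ s, A.maxMinor s ^ 2 := by
  simp [det_mul_eq_sum_maxMinor_mul_maxMinor, sq]

theorem exists_maxMinor_ne_zero_of_linearIndependent_row {K : Type*} [Field K]
    {M : Matrix (Fin k) ι K} (hM : LinearIndependent K M.row) : ∃ s, M.maxMinor s ≠ 0 := by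
  obtain ⟨N, hN⟩ : ∃ N : Matrix ι (Fin k) K, M * N = 1 := by
    refine mulVec_surjective_iff_exists_right_inverse.mp fun y => ?_
    have hrange : LinearMap.range M.mulVecLin = ⊤ :=
      Submodule.eq_top_of_finrank_eq (by rw [← rank, hM.rank_matrix]; simp)
    exact LinearMap.range_eq_top.mp hrange y
  by_contra! h0
  simpa [hN, h0] using det_mul_eq_sum_maxMinor_mul_maxMinor M N

theorem gcd_natAbs_maxMinor_eq_one_of_saturated {Z : Matrix (Fin k) ι ℤ}
    (hZ : LinearIndependent ℤ Z.row)
    (hsat : (span ℤ (Set.range Z.row)).toAddSubmonoid.NSMulSaturated) :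
    univ.gcd (fun s => (Z.maxMinor s).natAbs) = 1 := by
  by_contra hne
  obtain ⟨p, hp, hpdvd⟩ := Nat.exists_prime_and_dvd hne
  have : Fact p.Prime := ⟨hp⟩
  obtain ⟨s, hs⟩ :=
    exists_maxMinor_ne_zero_of_linearIndependent_row (linearIndependent_row_map_zmod p hZ hsat)
  refine hs ?_
  rw [show Z.map (Int.cast : ℤ → ZMod p) = Z.map (Int.castRingHom (ZMod p)) from rfl,
    map_maxMinor, eq_intCast, ZMod.intCast_zmod_eq_zero_iff_dvd]
  exact Int.natCast_dvd.mpr (hpdvd.trans (gcd_dvd (mem_univ s)))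

variable {V : Matrix (Fin r) ι ℤ} {Z : Matrix (Fin k) ι ℤ}

theorem natAbs_det_fromRows_mul_natAbs_maxMinor (hVZ : V * Zᵀ = 0) (e : Fin r ⊕ Fin k ≃ ι)
    (s : {s : Finset ι // s.card = r}) (hc : s.1ᶜ.card = k) :
    ((fromRows V Z).submatrix id e).det.natAbs * (V.maxMinor s).natAbs =
      (V * Vᵀ).det.natAbs * (Z.maxMinor ⟨s.1ᶜ, hc⟩).natAbs := by
  obtain ⟨σ, hσl, hσr⟩ := s.1.exists_sumEquiv_orderEmbOfFin_compl s.2 hc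
  have h := congrArg Int.natAbs (det_fromRows_mul_det_fromRows_one_submatrix hVZ e (σ ∘ Sum.inr))
  rwa [Int.natAbs_mul, Int.natAbs_mul, natAbs_det_submatrix_id_equiv
    (fromRows V ((1 : Matrix ι ι ℤ).submatrix (σ ∘ Sum.inr) id)) e σ,
    det_fromRows_one_submatrix_inr, hσl, hσr] at h

theorem natAbs_det_fromRows_mul_gcd (hVZ : V * Zᵀ = 0)
    (hZ : univ.gcd (fun t => (Z.maxMinor t).natAbs) = 1) (e : Fin r ⊕ Fin k ≃ ι) :
    ((fromRows V Z).submatrix id e).det.natAbs * univ.gcd (fun s => (V.maxMinor s).natAbs) =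
      (V * Vᵀ).det.natAbs := by
  have hcard : Fintype.card ι = r + k := by simp [← Fintype.card_congr e]
  have hc : ∀ s : {s : Finset ι // s.card = r}, s.1ᶜ.card = k := fun s => by
    rw [card_compl, s.2, hcard, Nat.add_sub_cancel_left]
  have hZc : univ.gcd (fun s : {s : Finset ι // s.card = r} =>
      (Z.maxMinor ⟨s.1ᶜ, hc s⟩).natAbs) = 1 := by
    refine Nat.dvd_one.mp (hZ ▸ dvd_gcd fun t _ => ?_)
    have htc : t.1ᶜ.card = r := by rw [card_compl, t.2, hcard, Nat.add_sub_cancel_right]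
    convert gcd_dvd (f := fun s : {s : Finset ι // s.card = r} =>
      (Z.maxMinor ⟨s.1ᶜ, hc s⟩).natAbs) (mem_univ ⟨t.1ᶜ, htc⟩) using 3
    exact Subtype.ext (compl_compl t.1).symm
  rw [← normalize_eq (Int.natAbs _), ← Finset.gcd_mul_left,
    gcd_congr rfl fun s _ => natAbs_det_fromRows_mul_natAbs_maxMinor hVZ e s (hc s),
    Finset.gcd_mul_left, normalize_eq, hZc, mul_one]

theorem det_mul_transpose_eq_gcd_sq_mul (hcard : Fintype.card ι = r + k) (hVZ : V * Zᵀ = 0)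
    (hZ : univ.gcd (fun t => (Z.maxMinor t).natAbs) = 1) :
    (V * Vᵀ).det =
      ((univ.gcd fun s => (V.maxMinor s).natAbs : ℕ) : ℤ) ^ 2 * (Z * Zᵀ).det := by
  set g := univ.gcd (fun s => (V.maxMinor s).natAbs)
  have e : Fin r ⊕ Fin k ≃ ι := Fintype.equivOfCardEq (by simp [hcard])
  set a := ((fromRows V Z).submatrix id e).det
  have hCB := det_mul_transpose_eq_sum_maxMinor_sq V
  have hP : 0 ≤ (V * Vᵀ).det := hCB ▸ sum_nonneg fun s _ => sq_nonneg _
  rcases hP.eq_or_lt with hP0 | hPpos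
  · have hV : ∀ s, V.maxMinor s = 0 := fun s => pow_eq_zero_iff two_ne_zero |>.mp <|
      (sum_eq_zero_iff_of_nonneg fun s _ => sq_nonneg _).mp (hCB ▸ hP0.symm) s (mem_univ s)
    have hg : g = 0 := gcd_eq_zero_iff.mpr fun s _ => by simp [hV s]
    rw [← hP0, hg]
    simp
  · have hag : (a.natAbs : ℤ) * g = (V * Vᵀ).det := by
      rw [← Int.natAbs_of_nonneg hP]
      exact_mod_cast natAbs_det_fromRows_mul_gcd hVZ hZ e
    refine mul_left_cancel₀ hPpos.ne' ?_
    calc (V * Vᵀ).det * (V * Vᵀ).det = (a.natAbs : ℤ) ^ 2 * g ^ 2 := by rw [← hag]; ring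
      _ = (V * Vᵀ).det * (g ^ 2 * (Z * Zᵀ).det) := by
        rw [Int.natAbs_sq, det_fromRows_submatrix_sq hVZ e]; ring

end MaxMinor

end Matrix

theorem stmt_1_general (n r : ℕ) (hrn : r ≤ n)
    (v : Fin r → (Fin n → ℤ))
    (minor : Finset (Fin n) → ℤ)
    (hminor : ∀ (s : Finset (Fin n)) (h : s.card = r),
      minor s = Matrix.det (Matrix.of fun i j : Fin r => v j ((s.orderIsoOfFin h i : Fin n))))
    (hminor0 : ∀ s : Finset (Fin n), s.card ≠ r → minor s = 0)
    (W : ℝ)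
    (hW : W = Real.sqrt (∑ s ∈ Finset.powersetCard r (Finset.univ : Finset (Fin n)),
      ((minor s : ℝ)) ^ 2))
    (D : ℕ)
    (hD : IsGreatest {d : ℕ | 0 < d ∧ ∀ s : Finset (Fin n), (d : ℤ) ∣ minor s} D)
    (z : Fin (n - r) → (Fin n → ℤ))
    (hzind : LinearIndependent ℤ z)
    (hzspan : ∀ x : Fin n → ℤ,
      (∀ i, ∑ t, x t * v i t = 0) ↔ x ∈ Submodule.span ℤ (Set.range z)) :
    Real.sqrt ((Matrix.det (Matrix.of fun i j : Fin (n - r) => ∑ t, z i t * z j t) : ℝ))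
      = W / D := by
  set V : Matrix (Fin r) (Fin n) ℤ := of v
  set Z : Matrix (Fin (n - r)) (Fin n) ℤ := of z
  have hL : span ℤ (Set.range Z.row) = LinearMap.ker V.mulVecLin := by
    ext x
    change x ∈ span ℤ (Set.range z) ↔ _
    rw [← hzspan, LinearMap.mem_ker, funext_iff]
    simp [V, mulVec, dotProduct, mul_comm]
  have hsat : (span ℤ (Set.range Z.row)).toAddSubmonoid.NSMulSaturated :=
    hL ▸ AddSubmonoid.ker_saturated V.mulVecLin.toAddMonoidHom
  have hminorV : ∀ s : {s : Finset (Fin n) // s.card = r}, minor s.1 = V.maxMinor s := fun s => by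
    rw [hminor s.1 s.2, maxMinor, ← det_transpose]
    rfl
  have hgcdV : univ.gcd (fun s => (V.maxMinor s).natAbs) = D := by
    simpa only [hminorV] using gcd_natAbs_subtype_eq_of_isGreatest hminor0 hD
  have hP := det_mul_transpose_eq_gcd_sq_mul (by simp; omega)
    (mul_transpose_eq_zero_of_span_le_ker hL.le)
    (gcd_natAbs_maxMinor_eq_one_of_saturated hzind hsat)
  have hWP : W = Real.sqrt ((V * Vᵀ).det : ℝ) := by
    rw [hW, det_mul_transpose_eq_sum_maxMinor_sq,
      sum_subtype (F := inferInstance) (powersetCard r univ) (fun s => mem_powersetCard_univ)]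
    push_cast
    simp_rw [hminorV]
  have hG : (of fun i j => ∑ t, (z i t : ℝ) * z j t).det = ((Z * Zᵀ).det : ℝ) := by
    rw [show ((Z * Zᵀ).det : ℝ) = Int.castRingHom ℝ (Z * Zᵀ).det from rfl, RingHom.map_det]
    congr 1
    ext i j
    simp [Z, mul_apply]
  have hDpos : (0 : ℝ) < D := by exact_mod_cast hD.1.1
  rw [hG, hWP, hP, hgcdV, Int.cast_mul, Int.cast_pow, Int.cast_natCast,
    Real.sqrt_mul (by positivity), Real.sqrt_sq hDpos.le, mul_div_cancel_left₀ _ hDpos.ne']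

/-- **Covolume of an orthogonal-complement lattice.**  Let `v 0, …, v (r-1) ∈ ℤ^n` be linearly
independent and `Λ = {x ∈ ℤ^n : x·v i = 0 for all i}`.  Let `D` be the largest positive integer
dividing every `r×r` minor of the matrix with columns `v i`, and `W` the Euclidean norm of the
vector of all `r×r` minors.  Then the covolume of the rank `n-r` lattice `Λ` (computed as the
square root of the Gram determinant of any ℤ-basis `z` of `Λ`) equals `W / D`. -/
theorem stmt_1 (n r : ℕ) (hr : 0 < r) (hrn : r ≤ n)
    (v : Fin r → (Fin n → ℤ))
    (hv : LinearIndependent ℤ v)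
    (minor : Finset (Fin n) → ℤ)
    (hminor : ∀ (s : Finset (Fin n)) (h : s.card = r),
      minor s = Matrix.det (Matrix.of fun i j : Fin r => v j ((s.orderIsoOfFin h i : Fin n))))
    (hminor0 : ∀ s : Finset (Fin n), s.card ≠ r → minor s = 0)
    (W : ℝ)
    (hW : W = Real.sqrt (∑ s ∈ Finset.powersetCard r (Finset.univ : Finset (Fin n)),
      ((minor s : ℝ)) ^ 2))
    (D : ℕ)
    (hD : IsGreatest {d : ℕ | 0 < d ∧ ∀ s : Finset (Fin n), (d : ℤ) ∣ minor s} D)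
    (z : Fin (n - r) → (Fin n → ℤ))
    (hzind : LinearIndependent ℤ z)
    (hzspan : ∀ x : Fin n → ℤ,
      (∀ i, ∑ t, x t * v i t = 0) ↔ x ∈ Submodule.span ℤ (Set.range z)) :
    Real.sqrt ((Matrix.det (Matrix.of fun i j : Fin (n - r) => ∑ t, z i t * z j t) : ℝ))
      = W / D :=
  stmt_1_general n r hrn v minor hminor hminor0 W hW D hD z hzind hzspan
end

section
/- Fix integers n > 3k ≥ 3 and θ as above, with T(v)_j = v_{j+1} (j<n), T(v)_n = θ v_1. For a prime p not dividing θ and p > n, the number of vectors b ∈ 𝔽_p^n such that the k vectors T^0(b),...,T^{k−1}(b) are linearly dependent over 𝔽_p (equivalently, all k×k minors of the k×n matrix they form vanish) is O(p^{k−1}), with implied constant depending only on n, k, θ. -/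
/-!
If `T^0 b, …, T^{k-1} b` are dependent, some nonzero `P` of degree `< k` has `P(T) b = 0`.
Since `T^n = θ`, the monic gcd `Q` of `P` and `X^n - θ` also kills `b`, and `Q(T) b = 0` is a
linear recurrence of order `deg Q < k`, so `b` is determined by its first `deg Q` coordinates.
A monic divisor of `X^n - θ` is a subproduct of its at most `n` irreducible factors, so there are
at most `2^n` candidates for `Q`, whence at most `2^n p^{k-1}` such `b`.
-/

/-- The shift-with-`θ` linear map on `(ZMod p)^n`. -/
def TmapF (n p : ℕ) (θ : ℤ) (v : Fin n → ZMod p) : Fin n → ZMod p :=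
  fun j => if h : (j : ℕ) + 1 < n then v ⟨(j : ℕ) + 1, h⟩ else (θ : ZMod p) * v ⟨0, j.pos⟩

open Polynomial UniqueFactorizationMonoid

section Divisors

variable {K : Type*} [Field K]

theorem card_normalizedFactors_le_natDegree [DecidableEq K] {A : K[X]} (hA : A ≠ 0) :
    Multiset.card (normalizedFactors A) ≤ A.natDegree := by
  have hdeg : ((normalizedFactors A).map natDegree).sum = A.natDegree := by
    rw [← natDegree_multiset_prod _ (zero_notMem_normalizedFactors A),
      prod_normalizedFactors_eq hA, natDegree_eq_of_degree_eq degree_normalize]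
  have hpos : ∀ d ∈ (normalizedFactors A).map natDegree, 1 ≤ d := by
    intro d hd
    obtain ⟨q, hq, rfl⟩ := Multiset.mem_map.mp hd
    exact (irreducible_of_normalized_factor q hq).natDegree_pos
  simpa [hdeg] using Multiset.card_nsmul_le_sum hpos

theorem exists_finset_monic_dvd {A : K[X]} (hA : A ≠ 0) :
    ∃ D : Finset K[X], D.card ≤ 2 ^ A.natDegree ∧ ∀ Q : K[X], Q.Monic → Q ∣ A → Q ∈ D := by
  classical
  refine ⟨(normalizedFactors A).powerset.toFinset.image Multiset.prod, ?_, fun Q hQ hQA => ?_⟩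
  · calc _ ≤ (normalizedFactors A).powerset.toFinset.card := Finset.card_image_le
      _ ≤ Multiset.card (normalizedFactors A).powerset := Multiset.toFinset_card_le _
      _ ≤ 2 ^ A.natDegree := by
        rw [Multiset.card_powerset]
        exact Nat.pow_le_pow_right two_pos (card_normalizedFactors_le_natDegree hA)
  · refine Finset.mem_image.mpr ⟨normalizedFactors Q, ?_, ?_⟩
    · rw [Multiset.mem_toFinset, Multiset.mem_powerset]
      exact (dvd_iff_normalizedFactors_le_normalizedFactors hQ.ne_zero hA).mp hQA
    · rw [prod_normalizedFactors_eq hQ.ne_zero, hQ.normalize_eq_self]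

end Divisors

theorem exists_aeval_apply_eq_zero_of_not_linearIndependent {R M : Type*} [CommRing R]
    [AddCommGroup M] [Module R M] {f : Module.End R M} {v : M} {k : ℕ}
    (h : ¬ LinearIndependent R (fun i : Fin k => (f ^ (i : ℕ)) v)) :
    ∃ P : R[X], P ≠ 0 ∧ P.natDegree < k ∧ aeval f P v = 0 := by
  obtain ⟨g, hg, i, hi⟩ := Fintype.not_linearIndependent_iff.mp h
  set P : degreeLT R k := (degreeLTEquiv R k).symm g
  have hcoeff : ∀ j : Fin k, (P : R[X]).coeff j = g j := fun j =>
    congrFun ((degreeLTEquiv R k).apply_symm_apply g) j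
  have hP0 : (P : R[X]) ≠ 0 := fun h0 => hi (by rw [← hcoeff, h0, coeff_zero])
  have hdeg : (P : R[X]).natDegree < k :=
    (natDegree_lt_iff_degree_lt hP0).mpr (mem_degreeLT.mp P.2)
  refine ⟨P, hP0, hdeg, ?_⟩
  rw [aeval_eq_sum_range' hdeg, LinearMap.sum_apply, ← hg, ← Fin.sum_univ_eq_sum_range]
  simp only [LinearMap.smul_apply, hcoeff]

theorem exists_monic_dvd_aeval_apply_eq_zero {K M : Type*} [Field K] [AddCommGroup M]
    [Module K M] {f : Module.End K M} {v : M} {P A : K[X]} (hP : P ≠ 0)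
    (hPv : aeval f P v = 0) (hAv : aeval f A v = 0) :
    ∃ Q : K[X], Q.Monic ∧ Q ∣ A ∧ Q.natDegree ≤ P.natDegree ∧ aeval f Q v = 0 := by
  classical
  have hQ0 : gcd P A ≠ 0 := fun h => hP ((gcd_eq_zero_iff P A).mp h).1
  obtain ⟨x, y, hxy⟩ := exists_gcd_eq_mul_add_mul P A
  refine ⟨gcd P A, ?_, gcd_dvd_right P A, natDegree_le_of_dvd (gcd_dvd_left P A) hP, ?_⟩
  · rw [← normalize_gcd]
    exact monic_normalize hQ0
  · rw [hxy, mul_comm P, mul_comm A, map_add, map_mul, map_mul, LinearMap.add_apply,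
      Module.End.mul_apply, Module.End.mul_apply, hPv, hAv, map_zero, map_zero, add_zero]

section TmapF

variable {n p : ℕ} {θ : ℤ}

def TmapFₗ (n p : ℕ) (θ : ℤ) : Module.End (ZMod p) (Fin n → ZMod p) where
  toFun := TmapF n p θ
  map_add' v w := by
    funext j
    simp only [TmapF, Pi.add_apply]
    split <;> ring
  map_smul' c v := by
    funext j
    simp only [TmapF, Pi.smul_apply, RingHom.id_apply, smul_eq_mul]
    split <;> ring

theorem TmapFₗ_pow_apply (i : ℕ) (v : Fin n → ZMod p) :
    (TmapFₗ n p θ ^ i) v = (TmapF n p θ)^[i] v :=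
  Module.End.pow_apply _ i v

theorem TmapF_iterate_apply_of_lt {i : ℕ} (v : Fin n → ZMod p) {j : Fin n} (h : j + i < n) :
    (TmapF n p θ)^[i] v j = v ⟨j + i, h⟩ := by
  induction i generalizing v with
  | zero => rfl
  | succ i ih =>
    rw [Function.iterate_succ_apply, ih _ (by omega), TmapF, dif_pos (by simpa using by omega)]
    simp only [add_assoc]

theorem TmapF_iterate_self (v : Fin n → ZMod p) : (TmapF n p θ)^[n] v = (θ : ZMod p) • v := by
  funext j
  have hn : (TmapF n p θ)^[n] = (TmapF n p θ)^[(n - 1 - j) + (j + 1)] := by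
    congr 1; omega
  rw [hn, Function.iterate_add_apply, Function.iterate_succ_apply',
    TmapF_iterate_apply_of_lt _ (by omega), TmapF, dif_neg (by simp; omega),
    TmapF_iterate_apply_of_lt _ (by simp)]
  simp

theorem aeval_TmapFₗ_X_pow_sub_C :
    aeval (TmapFₗ n p θ) (X ^ n - C (θ : ZMod p)) = 0 := by
  refine LinearMap.ext fun v => funext fun j => ?_
  simp [TmapFₗ_pow_apply, TmapF_iterate_self]

theorem aeval_TmapFₗ_apply_of_lt (Q : (ZMod p)[X]) (v : Fin n → ZMod p) {j : Fin n}
    (h : j + Q.natDegree < n) :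
    aeval (TmapFₗ n p θ) Q v j =
      ∑ i : Fin (Q.natDegree + 1), Q.coeff i * v ⟨j + i, by omega⟩ := by
  rw [aeval_eq_sum_range, LinearMap.sum_apply, Finset.sum_apply, ← Fin.sum_univ_eq_sum_range]
  refine Finset.sum_congr rfl fun i _ => ?_
  rw [LinearMap.smul_apply, Pi.smul_apply, TmapFₗ_pow_apply,
    TmapF_iterate_apply_of_lt _ (by omega), smul_eq_mul]

theorem eq_zero_of_aeval_TmapFₗ_apply_eq_zero {Q : (ZMod p)[X]} (hQ : Q.Monic)
    {v : Fin n → ZMod p} (hv : aeval (TmapFₗ n p θ) Q v = 0)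
    (h0 : ∀ j : Fin n, (j : ℕ) < Q.natDegree → v j = 0) : v = 0 := by
  funext ⟨j, hj⟩
  induction j using Nat.strong_induction_on with
  | _ j ih =>
    by_cases hjd : j < Q.natDegree
    · exact h0 _ hjd
    have row := aeval_TmapFₗ_apply_of_lt (θ := θ) Q v (j := ⟨j - Q.natDegree, by omega⟩)
      (by simp; omega)
    rw [hv, Fin.sum_univ_castSucc, Finset.sum_eq_zero fun i _ => by
      rw [ih _ (by simp; omega), Pi.zero_apply, mul_zero],
      zero_add] at row
    simpa [hQ.coeff_natDegree, show j - Q.natDegree + Q.natDegree = j by omega] using row.symm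

theorem ncard_setOf_aeval_TmapFₗ_apply_eq_zero_le [NeZero p] {Q : (ZMod p)[X]} (hQ : Q.Monic) :
    {v : Fin n → ZMod p | aeval (TmapFₗ n p θ) Q v = 0}.ncard ≤ p ^ Q.natDegree := by
  set d := Q.natDegree
  let restrict (v : {v : Fin n → ZMod p | aeval (TmapFₗ n p θ) Q v = 0})
      (j : {j : Fin n // (j : ℕ) < d}) : ZMod p := v.1 j
  have hinj : Function.Injective restrict := by
    intro v w hvw
    have hsub := eq_zero_of_aeval_TmapFₗ_apply_eq_zero (θ := θ) hQ (v := v.1 - w.1)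
      (by rw [map_sub, v.2, w.2, sub_zero])
      (fun j hj => sub_eq_zero.mpr (congrFun hvw ⟨j, hj⟩))
    exact Subtype.ext (sub_eq_zero.mp hsub)
  have hlow : Nat.card {j : Fin n // (j : ℕ) < d} ≤ Nat.card (Fin d) :=
    Nat.card_le_card_of_injective (fun j => ⟨j.1, j.2⟩)
      fun i j h => Subtype.ext (Fin.ext (Fin.mk.inj h))
  calc _ = Nat.card {v : Fin n → ZMod p | aeval (TmapFₗ n p θ) Q v = 0} :=
        (Nat.card_coe_set_eq _).symm
    _ ≤ Nat.card ({j : Fin n // (j : ℕ) < d} → ZMod p) := Nat.card_le_card_of_injective _ hinj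
    _ = p ^ Nat.card {j : Fin n // (j : ℕ) < d} := by rw [Nat.card_fun, Nat.card_zmod]
    _ ≤ p ^ d := Nat.pow_le_pow_right (NeZero.pos p) (hlow.trans_eq (Nat.card_fin d))

theorem exists_monic_dvd_X_pow_sub_C_of_not_linearIndependent [Fact p.Prime] {k : ℕ}
    {b : Fin n → ZMod p}
    (h : ¬ LinearIndependent (ZMod p) (fun i : Fin k => (TmapF n p θ)^[(i : ℕ)] b)) :
    ∃ Q : (ZMod p)[X], Q.Monic ∧ Q ∣ X ^ n - C (θ : ZMod p) ∧ Q.natDegree < k ∧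
      aeval (TmapFₗ n p θ) Q b = 0 := by
  simp_rw [← TmapFₗ_pow_apply] at h
  obtain ⟨P, hP0, hPk, hPb⟩ := exists_aeval_apply_eq_zero_of_not_linearIndependent h
  obtain ⟨Q, hQ, hQA, hQP, hQb⟩ := exists_monic_dvd_aeval_apply_eq_zero hP0 hPb
    (by rw [aeval_TmapFₗ_X_pow_sub_C, LinearMap.zero_apply])
  exact ⟨Q, hQ, hQA, hQP.trans_lt hPk, hQb⟩

theorem ncard_setOf_not_linearIndependent_TmapF_iterate_le [Fact p.Prime] (hn : 0 < n) (k : ℕ) :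
    {b : Fin n → ZMod p |
        ¬ LinearIndependent (ZMod p) (fun i : Fin k => (TmapF n p θ)^[(i : ℕ)] b)}.ncard ≤
      2 ^ n * p ^ (k - 1) := by
  have hA : (X ^ n - C (θ : ZMod p)).natDegree = n := natDegree_X_pow_sub_C
  obtain ⟨D, hDcard, hD⟩ := exists_finset_monic_dvd (ne_zero_of_natDegree_gt (hA ▸ hn))
  set D' := D.filter fun Q => Q.Monic ∧ Q.natDegree < k
  have hcover : {b : Fin n → ZMod p | ¬ LinearIndependent (ZMod p)
      (fun i : Fin k => (TmapF n p θ)^[(i : ℕ)] b)} ⊆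
      ⋃ Q ∈ D', {v | aeval (TmapFₗ n p θ) Q v = 0} := by
    intro b hb
    obtain ⟨Q, hQ, hQA, hQk, hQb⟩ := exists_monic_dvd_X_pow_sub_C_of_not_linearIndependent hb
    exact Set.mem_biUnion (Finset.mem_filter.mpr ⟨hD Q hQ hQA, hQ, hQk⟩) hQb
  calc _ ≤ (⋃ Q ∈ D', {v | aeval (TmapFₗ n p θ) Q v = 0}).ncard :=
        Set.ncard_le_ncard hcover (Set.toFinite _)
    _ ≤ ∑ Q ∈ D', {v | aeval (TmapFₗ n p θ) Q v = 0}.ncard := D'.set_ncard_biUnion_le _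
    _ ≤ ∑ Q ∈ D', p ^ (k - 1) := Finset.sum_le_sum fun Q hQ => by
        obtain ⟨hQ, hQk⟩ := (Finset.mem_filter.mp hQ).2
        exact (ncard_setOf_aeval_TmapFₗ_apply_eq_zero_le hQ).trans
          (Nat.pow_le_pow_right (NeZero.pos p) (by omega))
    _ ≤ 2 ^ n * p ^ (k - 1) := by
        rw [Finset.sum_const, smul_eq_mul, ← hA]
        gcongr
        exact (Finset.card_filter_le _ _).trans hDcard

end TmapF

theorem stmt_4_general (n k : ℕ) (hnk : 3 * k < n) (θ : ℤ) :
    ∃ C : ℝ, 0 < C ∧ ∀ p : ℕ, p.Prime → ¬ ((p : ℤ) ∣ θ) → n < p →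
      (Nat.card {b : Fin n → ZMod p | ¬ LinearIndependent (ZMod p)
          (fun i : Fin k => (TmapF n p θ)^[(i : ℕ)] b)} : ℝ)
        ≤ C * (p : ℝ) ^ (k - 1) := by
  refine ⟨2 ^ n, by positivity, fun p hp _ _ => ?_⟩
  have := Fact.mk hp
  rw [Nat.card_coe_set_eq]
  exact_mod_cast ncard_setOf_not_linearIndependent_TmapF_iterate_le (θ := θ) (by omega) k

/-- **Degenerate vectors mod `p` are rare.**  Fix `n > 3k ≥ 3` and `θ ≠ 0` with `x^n - θ`
irreducible over ℚ.  There is a constant `C = C(n,k,θ)` such that for every prime `p` with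
`p ∤ θ` and `p > n`, the number of `b ∈ 𝔽_p^n` for which `T^0 b, …, T^{k-1} b` are linearly
dependent over `𝔽_p` is at most `C · p^{k-1}`. -/
theorem stmt_4 (n k : ℕ) (hk : 1 ≤ k) (hnk : 3 * k < n) (θ : ℤ) (hθ : θ ≠ 0)
    (hirr : Irreducible ((Polynomial.X : Polynomial ℚ) ^ n - Polynomial.C (θ : ℚ))) :
    ∃ C : ℝ, 0 < C ∧ ∀ p : ℕ, p.Prime → ¬ ((p : ℤ) ∣ θ) → n < p →
      (Nat.card {b : Fin n → ZMod p | ¬ LinearIndependent (ZMod p)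
          (fun i : Fin k => (TmapF n p θ)^[(i : ℕ)] b)} : ℝ)
        ≤ C * (p : ℝ) ^ (k - 1) :=
  stmt_4_general n k hnk θ
end

section
/- Let K be a number field of degree n, and let ω_1,...,ω_{n−k} be elements of the ring of integers O_K of K that are ℚ-linearly independent, such that the polynomial N(x) = N_{K/ℚ}(x_1 ω_1 + ... + x_{n−k} ω_{n−k}) in n−k variables is irreducible over ℚ and has no fixed prime divisor. Define ρ(𝔡) = #{x ∈ [1,N(𝔡)]^{n−k} : 𝔡 | (Σ x_i ω_i)} / N(𝔡)^{n−k−1} for integral ideals 𝔡. Then ρ(𝔭) = 1 for every degree-one prime ideal 𝔭 of K that does not lie over a prime dividing the discriminant of K or the index [O_K : ℤ[ω_1,...,ω_{n−k}]]. -/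
set_option synthInstance.maxHeartbeats 1000000
set_option maxHeartbeats 2000000


/-- **Density `ρ(𝔭) = 1` at degree-one primes.**  Let `K` be a number field of degree `n` and
`ω 0, …, ω (n-k-1) ∈ O_K` be ℚ-linearly independent, such that the degree-`n` norm form
`N(x) = N_{K/ℚ}(∑ xᵢ ωᵢ)` (as a polynomial `P` in `n-k` variables) is irreducible over ℚ and
has no fixed prime divisor.  Then for every degree-one prime ideal `𝔭` of `K`, lying over a
rational prime `p` dividing neither the discriminant of `K` nor the index
`[O_K : ℤ[ω_1,…,ω_{n-k}]]`, one has
`#{x ∈ [1,p]^{n-k} : 𝔭 ∣ (∑ xᵢ ωᵢ)} = p^{n-k-1}`, i.e. `ρ(𝔭) = 1`. -/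
theorem stmt_5 (n k : ℕ) (hk : 1 ≤ k) (hkn : k < n)
    (K : Type*) [Field K] [NumberField K]
    (hdeg : Module.finrank ℚ K = n)
    (ω : Fin (n - k) → NumberField.RingOfIntegers K)
    (hind : LinearIndependent ℚ (fun i => ((ω i : K))))
    (P : MvPolynomial (Fin (n - k)) ℚ)
    (hP : ∀ x : Fin (n - k) → ℚ,
      MvPolynomial.eval x P = Algebra.norm ℚ (∑ i, x i • ((ω i : K))))
    (hPirr : Irreducible P)
    (hnofix : ∀ p : ℕ, p.Prime → ∃ x : Fin (n - k) → ℤ,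
      ¬ ((p : ℤ) ∣ Algebra.norm ℤ (∑ i, x i • ω i)))
    (𝔭 : Ideal (NumberField.RingOfIntegers K)) (h𝔭 : 𝔭.IsPrime) (h𝔭0 : 𝔭 ≠ ⊥)
    (p : ℕ) (hp : p.Prime) (hnorm : Ideal.absNorm 𝔭 = p)
    (hpdisc : ¬ ((p : ℤ) ∣ NumberField.discr K))
    (hpindex : ¬ (p ∣
      (Subalgebra.toSubmodule (Algebra.adjoin ℤ (Set.range ω))).toAddSubgroup.index)) :
    Nat.card {x : Fin (n - k) → ℕ | (∀ i, 1 ≤ x i ∧ x i ≤ p) ∧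
        𝔭 ∣ Ideal.span {∑ i, (x i : NumberField.RingOfIntegers K) * ω i}}
      = p ^ (n - k - 1) := by
  classical
  have _dummy : True := trivial
  have hm1 : 1 ≤ n - k := by omega
  haveI : NeZero p := ⟨hp.ne_zero⟩
  have hpp : ((p : ℕ) : NumberField.RingOfIntegers K) ∈ 𝔭 := by rw [← hnorm]; exact Ideal.absNorm_mem 𝔭
  haveI : Nontrivial (NumberField.RingOfIntegers K ⧸ 𝔭) := Ideal.Quotient.nontrivial_iff.mpr h𝔭.ne_top
  have hp0 : ((p : ℕ) : NumberField.RingOfIntegers K ⧸ 𝔭) = 0 := by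
    rw [← map_natCast (Ideal.Quotient.mk 𝔭)]
    exact (Ideal.Quotient.eq_zero_iff_mem).2 hpp
  haveI hchar : CharP (NumberField.RingOfIntegers K ⧸ 𝔭) p := (CharP.charP_iff_prime_eq_zero hp).2 hp0
  set c : ZMod p →+* NumberField.RingOfIntegers K ⧸ 𝔭 := ZMod.castHom dvd_rfl _ with hc
  set φ : (Fin (n - k) → ZMod p) →+ NumberField.RingOfIntegers K ⧸ 𝔭 :=
    { toFun := fun y => ∑ i, c (y i) * Ideal.Quotient.mk 𝔭 (ω i)
      map_zero' := by simp
      map_add' := by intro a b; simp [add_mul, Finset.sum_add_distrib] } with hφ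
  have hφapp : ∀ y, φ y = ∑ i, c (y i) * Ideal.Quotient.mk 𝔭 (ω i) := fun y => rfl
  -- key equivalence
  have key : ∀ x : Fin (n - k) → ℕ,
      (𝔭 ∣ Ideal.span {∑ i, (x i : NumberField.RingOfIntegers K) * ω i} ↔ φ (fun i => ((x i : ZMod p))) = 0) := by
    intro x
    rw [Ideal.dvd_iff_le, Ideal.span_singleton_le_iff_mem,
      ← Ideal.Quotient.eq_zero_iff_mem]
    have : φ (fun i => ((x i : ZMod p))) = Ideal.Quotient.mk 𝔭 (∑ i, (x i : NumberField.RingOfIntegers K) * ω i) := by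
      rw [hφapp, map_sum]
      refine Finset.sum_congr rfl fun i _ => ?_
      rw [map_mul, map_natCast, map_natCast]
    rw [this]
  -- some ω j not in 𝔭
  obtain ⟨x0, hx0⟩ := hnofix p hp
  have hj : ∃ j, Ideal.Quotient.mk 𝔭 (ω j) ≠ 0 := by
    by_contra h
    push_neg at h
    have hmem : (∑ i, x0 i • ω i) ∈ 𝔭 := by
      refine Ideal.sum_mem _ fun i _ => ?_
      rw [zsmul_eq_mul]
      exact Ideal.mul_mem_left _ _ ((Ideal.Quotient.eq_zero_iff_mem).1 (h i))
    have := Ideal.absNorm_dvd_norm_of_mem hmem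
    rw [hnorm] at this
    exact hx0 this
  obtain ⟨j, hj⟩ := hj
  have hcardQ : Nat.card (NumberField.RingOfIntegers K ⧸ 𝔭) = p := by
    rw [← hnorm, Ideal.absNorm_apply, Submodule.cardQuot_apply]
  -- card of range is p
  have hrange : Nat.card φ.range = p := by
    have hdvd : Nat.card φ.range ∣ p := by
      have h := AddSubgroup.card_addSubgroup_dvd_card φ.range
      rwa [hcardQ] at h
    rcases hp.eq_one_or_self_of_dvd _ hdvd with h1 | h1
    · exfalso
      have hbot : φ.range = ⊥ := by
        rwa [AddSubgroup.card_eq_one] at h1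
      have hv : φ (Pi.single j 1) = Ideal.Quotient.mk 𝔭 (ω j) := by
        rw [hφapp]
        rw [Finset.sum_eq_single j]
        · simp
        · intro i _ hij
          simp [Pi.single_eq_of_ne hij]
        · simp
      have : φ (Pi.single j 1) ∈ φ.range := ⟨_, rfl⟩
      rw [hbot, AddSubgroup.mem_bot, hv] at this
      exact hj this
    · exact h1
  -- card of kernel
  have hker : Nat.card φ.ker = p ^ (n - k - 1) := by
    have hmi := AddSubgroup.card_mul_index φ.ker
    rw [AddSubgroup.index_ker, hrange] at hmi
    have hdom : Nat.card (Fin (n - k) → ZMod p) = p ^ (n - k) := by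
      simp [Nat.card_eq_fintype_card, ZMod.card]
    rw [hdom] at hmi
    have h2 : Nat.card φ.ker * p = p ^ (n - k - 1) * p := by
      rw [hmi, ← pow_succ]
      congr 1
      omega
    exact Nat.eq_of_mul_eq_mul_right hp.pos h2
  rw [← hker]
  -- bijection
  refine Nat.card_eq_of_bijective
    (fun s => ⟨fun i => ((s.1 i : ZMod p)), ?_⟩) ⟨?_, ?_⟩
  · exact (key s.1).1 s.2.2
  · rintro ⟨s, hs⟩ ⟨t, ht⟩ hst
    have hfun : ∀ i, ((s i : ZMod p)) = ((t i : ZMod p)) := fun i =>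
      congrFun (congrArg Subtype.val hst) i
    refine Subtype.ext (funext fun i => ?_)
    show s i = t i
    have hmod : (p : ℤ) ∣ (t i : ℤ) - (s i : ℤ) :=
      (ZMod.natCast_eq_natCast_iff _ _ _).1 (hfun i) |>.dvd
    have h1 := (hs.1 i).1
    have h2 := (hs.1 i).2
    have h3 := (ht.1 i).1
    have h4 := (ht.1 i).2
    have : (t i : ℤ) - (s i : ℤ) = 0 := by
      refine Int.eq_zero_of_abs_lt_dvd hmod ?_
      rw [abs_sub_lt_iff]
      omega
    omega
  · rintro ⟨y, hy⟩
    set x : Fin (n - k) → ℕ := fun i => if y i = 0 then p else (y i).val with hx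
    have hcast : ∀ i, ((x i : ZMod p)) = y i := by
      intro i
      by_cases h : y i = 0
      · simp [hx, h, ZMod.natCast_self]
      · simp [hx, h, ZMod.natCast_rightInverse (y i)]
    have hbounds : ∀ i, 1 ≤ x i ∧ x i ≤ p := by
      intro i
      by_cases h : y i = 0
      · have hppos := hp.pos
        simp only [hx, if_pos h]
        omega
      · have hv : (y i).val < p := ZMod.val_lt (y i)
        have hv0 : (y i).val ≠ 0 := fun h0 => h ((ZMod.val_eq_zero _).1 h0)
        simp only [hx, if_neg h]
        omega
    have hdvd : 𝔭 ∣ Ideal.span {∑ i, (x i : NumberField.RingOfIntegers K) * ω i} := by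
      rw [key x]
      have : (fun i => ((x i : ZMod p))) = y := funext hcast
      rw [this]
      exact hy
    exact ⟨⟨x, ⟨hbounds, hdvd⟩⟩, Subtype.ext (funext hcast)⟩
end

section
/- Let K be a number field of degree n and let τ(𝔞) denote the number of integral ideal divisors of the ideal 𝔞. Then for every integer m > 0 and every integral ideal 𝔞, there exists an ideal 𝔟 | 𝔞 with N(𝔟) ≤ N(𝔞)^{1/m} and τ(𝔞) ≤ 2^{m−1} τ(𝔟)^{2m−1}. -/
/-!
Put `X = N(𝔞)^{1/m}` and take for `𝔟` a divisor of `𝔞` of norm at most `X` with the largest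
number `T` of divisors. By induction on `k`, every divisor `𝔠` of `𝔞` with `N(𝔠) ≤ X^{k+1}` has
`τ(𝔠) ≤ 2^k T^{2k+1}`: split off from `𝔠` a divisor `B` of norm at most `X` whose norm is
maximal. If the cofactor has a prime factor `𝔮` of norm at most `X`, maximality forces
`N(B𝔮) > X`, so removing `B` and `𝔮` leaves a divisor of norm below `X^k`. Otherwise every prime
factor of the cofactor has norm above `X`, so it has at most `k` prime factors counted with
multiplicity, hence at most `2^k` divisors.
-/

open Ideal UniqueFactorizationMonoid

local notation:max "τ" a:max => Nat.card (Set.ofPred fun c => c ∣ a)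

namespace UniqueFactorizationMonoid

variable {M : Type*} [CommMonoidWithZero M] [UniqueFactorizationMonoid M]

theorem finite_setOf_dvd [Finite Mˣ] {a : M} (ha : a ≠ 0) : {c : M | c ∣ a}.Finite :=
  have := Fintype.ofFinite Mˣ
  Set.finite_coe_iff.mp (@Finite.of_fintype _ (fintypeSubtypeDvd a ha))

theorem card_setOf_dvd_mul_le [Finite Mˣ] {a b : M} (hab : a * b ≠ 0) :
    τ (a * b) ≤ τ a * τ b := by
  have := (finite_setOf_dvd (left_ne_zero_of_mul hab)).to_subtype
  have := (finite_setOf_dvd (right_ne_zero_of_mul hab)).to_subtype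
  rw [← Nat.card_prod]
  refine Nat.card_le_card_of_surjective
    (fun p : {c | c ∣ a} × {c | c ∣ b} => ⟨p.1.1 * p.2.1, mul_dvd_mul p.1.2 p.2.2⟩) ?_
  rintro ⟨d, hd⟩
  obtain ⟨d₁, d₂, h₁, h₂, rfl⟩ := exists_dvd_and_dvd_of_dvd_mul hd
  exact ⟨(⟨d₁, h₁⟩, ⟨d₂, h₂⟩), rfl⟩

theorem card_setOf_dvd_pos [Finite Mˣ] {a : M} (ha : a ≠ 0) : 0 < τ a :=
  have := (finite_setOf_dvd ha).to_subtype
  have : Nonempty {c | c ∣ a} := ⟨⟨1, one_dvd a⟩⟩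
  Nat.card_pos

theorem card_setOf_dvd_le_two_pow [NormalizationMonoid M] [Subsingleton Mˣ] {a : M}
    (ha : a ≠ 0) : τ a ≤ 2 ^ Multiset.card (normalizedFactors a) := by
  classical
  have hne {d : M} (hd : d ∣ a) : d ≠ 0 := ne_zero_of_dvd_ne_zero ha hd
  let factorsOf (d : {d | d ∣ a}) : (normalizedFactors a).powerset.toFinset :=
    ⟨normalizedFactors d.1, by
      rw [Multiset.mem_toFinset, Multiset.mem_powerset]
      exact (dvd_iff_normalizedFactors_le_normalizedFactors (hne d.2) ha).mp d.2⟩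
  have factorsOf_injective : Function.Injective factorsOf := fun d₁ d₂ h =>
    Subtype.ext <| associated_iff_eq.mp <|
      (associated_iff_normalizedFactors_eq_normalizedFactors (hne d₁.2) (hne d₂.2)).mpr
        (congrArg Subtype.val h)
  calc τ a ≤ Nat.card (normalizedFactors a).powerset.toFinset :=
        Nat.card_le_card_of_injective _ factorsOf_injective
    _ ≤ Multiset.card (normalizedFactors a).powerset := by
        rw [Nat.card_eq_finsetCard]; exact Multiset.toFinset_card_le _
    _ = 2 ^ Multiset.card (normalizedFactors a) := Multiset.card_powerset _

end UniqueFactorizationMonoid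

namespace Ideal

variable {S : Type*} [CommRing S] [IsDedekindDomain S] [Module.Free ℤ S]

theorem card_normalizedFactors_le_of_lt_absNorm {c : Ideal S} (hc : c ≠ 0) {X : ℝ} (hX : 1 ≤ X)
    (hfactors : ∀ p ∈ normalizedFactors c, X < absNorm p) {n : ℕ}
    (hcX : (absNorm c : ℝ) ≤ X ^ (n + 1)) : Multiset.card (normalizedFactors c) ≤ n := by
  by_contra! hn
  have hne : normalizedFactors c ≠ 0 := Multiset.card_pos.mp (by omega)
  have := calc X ^ (n + 1)
      ≤ X ^ Multiset.card (normalizedFactors c) := pow_le_pow_right₀ hX hn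
    _ = ((normalizedFactors c).map fun _ => X).prod := by simp
    _ < ((normalizedFactors c).map fun p => (absNorm p : ℝ)).prod :=
        Multiset.prod_map_lt_prod_map hne _ _ (fun _ _ => by positivity) hfactors
    _ = absNorm c := by
        conv_rhs => rw [← normalize_eq c, ← prod_normalizedFactors_eq hc, map_multiset_prod,
          Nat.cast_multiset_prod, Multiset.map_map]
        rfl
  linarith

variable [Module.Finite ℤ S]

theorem absNorm_pos_of_ne_zero {I : Ideal S} (hI : I ≠ 0) : 0 < absNorm I :=
  Nat.pos_of_ne_zero (absNorm_eq_zero_iff.not.mpr hI)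

theorem one_lt_absNorm_of_prime {P : Ideal S} (hP : Prime P) : 1 < absNorm P :=
  lt_of_le_of_ne (absNorm_pos_of_ne_zero hP.ne_zero)
    (fun h => hP.not_isUnit (isUnit_iff.mpr (absNorm_eq_one_iff.mp h.symm)))

theorem exists_mul_eq_absNorm_le_and_lt_absNorm_mul {c : Ideal S} (hc : c ≠ 0) {X : ℝ}
    (hX : 1 ≤ X) : ∃ B c', c = B * c' ∧ (absNorm B : ℝ) ≤ X ∧
      ∀ q, Prime q → q ∣ c' → X < absNorm B * absNorm q := by
  obtain ⟨B, ⟨⟨c', rfl⟩, hBX⟩, hBmax⟩ := Set.exists_max_image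
    {d | d ∣ c ∧ (absNorm d : ℝ) ≤ X} (fun d => absNorm d)
    ((finite_setOf_dvd hc).subset fun _ hd => hd.1) ⟨1, one_dvd c, by simpa using hX⟩
  refine ⟨B, c', rfl, hBX, fun q hq hqc' => lt_of_not_ge fun hBq => ?_⟩
  -- `B * q` would be a small divisor of `c` of larger norm than `B`
  have hle : absNorm B * absNorm q ≤ absNorm B :=
    map_mul absNorm B q ▸ hBmax (B * q) ⟨mul_dvd_mul_left B hqc', by simpa using hBq⟩
  have hB := absNorm_pos_of_ne_zero (left_ne_zero_of_mul hc)
  have hq := one_lt_absNorm_of_prime hq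
  nlinarith

theorem card_setOf_dvd_cofactor_le {a : Ideal S} (ha : a ≠ 0) {X : ℝ} (hX : 1 ≤ X) {T : ℕ}
    (hT : ∀ d, d ∣ a → (absNorm d : ℝ) ≤ X → τ d ≤ T) {k : ℕ}
    (ih : ∀ c, c ∣ a → (absNorm c : ℝ) ≤ X ^ (k + 1) → τ c ≤ 2 ^ k * T ^ (2 * k + 1))
    {B c' : Ideal S} (hBc'a : B * c' ∣ a) (hBc'X : (absNorm (B * c') : ℝ) ≤ X ^ (k + 2))
    (hprimes : ∀ q, Prime q → q ∣ c' → X < absNorm B * absNorm q) :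
    τ c' ≤ 2 ^ (k + 1) * T ^ (2 * k + 2) := by
  have hBc' : B * c' ≠ 0 := ne_zero_of_dvd_ne_zero ha hBc'a
  have hc'a : c' ∣ a := dvd_of_mul_left_dvd hBc'a
  by_cases hsmall : ∃ q, Prime q ∧ q ∣ c' ∧ (absNorm q : ℝ) ≤ X
  · obtain ⟨q, hq, ⟨c'', rfl⟩, hqX⟩ := hsmall
    have hc''X : (absNorm c'' : ℝ) ≤ X ^ (k + 1) := by
      refine le_of_mul_le_mul_right ?_ (zero_lt_one.trans_le hX)
      calc (absNorm c'' : ℝ) * X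
          ≤ absNorm c'' * (absNorm B * absNorm q) := by
            gcongr; exact (hprimes q hq (dvd_mul_right q c'')).le
        _ = absNorm (B * (q * c'')) := by push_cast [map_mul]; ring
        _ ≤ X ^ (k + 1) * X := by rw [← pow_succ]; exact hBc'X
    calc τ (q * c'') ≤ τ q * τ c'' := card_setOf_dvd_mul_le (right_ne_zero_of_mul hBc')
      _ ≤ T * (2 ^ k * T ^ (2 * k + 1)) :=
          Nat.mul_le_mul (hT q (dvd_of_mul_right_dvd hc'a) hqX)
            (ih c'' (dvd_of_mul_left_dvd hc'a) hc''X)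
      _ = 2 ^ k * T ^ (2 * k + 2) := by ring
      _ ≤ 2 ^ (k + 1) * T ^ (2 * k + 2) :=
          Nat.mul_le_mul_right _ (Nat.pow_le_pow_right two_pos k.le_succ)
  · push Not at hsmall
    have hc'X : (absNorm c' : ℝ) ≤ X ^ (k + 2) := by
      refine le_trans ?_ hBc'X
      rw [map_mul, Nat.cast_mul]
      exact le_mul_of_one_le_left (Nat.cast_nonneg _)
        (by exact_mod_cast absNorm_pos_of_ne_zero (left_ne_zero_of_mul hBc'))
    have hΩ := card_normalizedFactors_le_of_lt_absNorm (right_ne_zero_of_mul hBc') hX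
      (fun p hp => hsmall p (prime_of_normalized_factor p hp) (dvd_of_mem_normalizedFactors hp))
      hc'X
    have hTpos : 0 < T := (card_setOf_dvd_pos one_ne_zero).trans_le
      (hT 1 (one_dvd a) (by simpa using hX))
    calc τ c' ≤ 2 ^ Multiset.card (normalizedFactors c') :=
          card_setOf_dvd_le_two_pow (right_ne_zero_of_mul hBc')
      _ ≤ 2 ^ (k + 1) := Nat.pow_le_pow_right two_pos hΩ
      _ ≤ 2 ^ (k + 1) * T ^ (2 * k + 2) := Nat.le_mul_of_pos_right _ (by positivity)

theorem card_setOf_dvd_le_of_absNorm_le_pow {a : Ideal S} (ha : a ≠ 0) {X : ℝ} (hX : 1 ≤ X)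
    {T : ℕ} (hT : ∀ d, d ∣ a → (absNorm d : ℝ) ≤ X → τ d ≤ T) (k : ℕ) :
    ∀ c, c ∣ a → (absNorm c : ℝ) ≤ X ^ (k + 1) → τ c ≤ 2 ^ k * T ^ (2 * k + 1) := by
  induction k with
  | zero => simpa using hT
  | succ k ih =>
    intro c hca hcX
    obtain ⟨B, c', rfl, hBX, hprimes⟩ :=
      exists_mul_eq_absNorm_le_and_lt_absNorm_mul (ne_zero_of_dvd_ne_zero ha hca) hX
    calc τ (B * c') ≤ τ B * τ c' := card_setOf_dvd_mul_le (ne_zero_of_dvd_ne_zero ha hca)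
      _ ≤ T * (2 ^ (k + 1) * T ^ (2 * k + 2)) :=
          Nat.mul_le_mul (hT B (dvd_of_mul_right_dvd hca) hBX)
            (card_setOf_dvd_cofactor_le ha hX hT ih hca hcX hprimes)
      _ = 2 ^ (k + 1) * T ^ (2 * (k + 1) + 1) := by ring

end Ideal

/-- **Divisor-switching trick in number fields.**  Let `K` be a number field and `τ(𝔞)` the
number of integral ideal divisors of a nonzero integral ideal `𝔞`.  Then for every `m > 0`
there exists `𝔟 ∣ 𝔞` with `N(𝔟) ≤ N(𝔞)^{1/m}` and `τ(𝔞) ≤ 2^{m-1} τ(𝔟)^{2m-1}`. -/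
theorem stmt_8 (K : Type*) [Field K] [NumberField K]
    (m : ℕ) (hm : 0 < m)
    (𝔞 : Ideal (NumberField.RingOfIntegers K)) (h𝔞 : 𝔞 ≠ ⊥) :
    ∃ 𝔟 : Ideal (NumberField.RingOfIntegers K), 𝔟 ∣ 𝔞 ∧
      (Ideal.absNorm 𝔟 : ℝ) ≤ (Ideal.absNorm 𝔞 : ℝ) ^ ((1 : ℝ) / m) ∧
      (Nat.card {𝔠 : Ideal (NumberField.RingOfIntegers K) | 𝔠 ∣ 𝔞} : ℝ)
        ≤ 2 ^ (m - 1) *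
          (Nat.card {𝔠 : Ideal (NumberField.RingOfIntegers K) | 𝔠 ∣ 𝔟} : ℝ) ^ (2 * m - 1) := by
  obtain ⟨k, rfl⟩ : ∃ k, m = k + 1 := Nat.exists_eq_add_one.mpr hm
  set X : ℝ := (absNorm 𝔞 : ℝ) ^ ((1 : ℝ) / (k + 1 : ℕ))
  have hX : 1 ≤ X := Real.one_le_rpow
    (by exact_mod_cast absNorm_pos_of_ne_zero h𝔞) (by positivity)
  have hXpow : X ^ (k + 1) = absNorm 𝔞 := by
    rw [← Real.rpow_natCast, ← Real.rpow_mul (by positivity), one_div_mul_cancel (by positivity),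
      Real.rpow_one]
  obtain ⟨𝔟, ⟨h𝔟𝔞, h𝔟X⟩, h𝔟max⟩ := Set.exists_max_image
    {d | d ∣ 𝔞 ∧ (absNorm d : ℝ) ≤ X} (fun d => τ d)
    ((finite_setOf_dvd h𝔞).subset fun _ hd => hd.1) ⟨1, one_dvd 𝔞, by simpa using hX⟩
  refine ⟨𝔟, h𝔟𝔞, h𝔟X, ?_⟩
  have := card_setOf_dvd_le_of_absNorm_le_pow h𝔞 hX (fun d hd𝔞 hdX => h𝔟max d ⟨hd𝔞, hdX⟩) k
    𝔞 dvd_rfl hXpow.ge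
  rw [Nat.add_sub_cancel, show 2 * (k + 1) - 1 = 2 * k + 1 by omega]
  exact_mod_cast this
end

section
/- Let K = ℚ(θ^{1/n}) with n > 2k, q a positive integer, and let χ be a primitive character of (ℤ[θ^{1/n}]/qℤ[θ^{1/n}])^×. Then |Σ_{a ∈ [1,q]^{n−k}} χ(Σ_{i=1}^{n−k} a_i θ^{(i−1)/n})| ≤ q^n / φ_K((q))^{1/2} ≤ q^{n/2 + o(1)}; in particular this sum is o(q^{n−k}) as q → ∞. -/
/-!
Write `R = (ℤ/q)[x]/(xⁿ - θ)` and let `ψ(x) = e(c(x)/q)`, where `c(x)` is the top coefficient of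
the reduced representative of `x`. The pairing `(x, y) ↦ ψ(xy)` is nondegenerate, and the
truncated elements of length `n - k` are exactly the annihilator of those of length `k`. Fourier
expansion of the indicator of the annihilator gives `qᵏ S = ∑_y G(χ, ψ_y)` with `y` running over
the `qᵏ` truncated elements of length `k`, where `G(χ, ψ_y) = ∑_x χ(x) ψ(yx)`. For primitive `χ`
the Gauss sum `G(χ, ψ_y)` vanishes unless `y` is a unit, and `|G(χ, ψ_u)| = |G(χ, ψ)|` for units
`u`; Plancherel, `∑_y |G(χ, ψ_y)|² = |R| |Rˣ|`, then gives `|G(χ, ψ)|² = |R| = qⁿ`. Hence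
`|S| ≤ q^{n/2}`, which yields all three bounds because `|Rˣ| ≤ qⁿ` and `n < 2(n - k)`.
-/

/-- The ring `ℤ[θ^{1/n}]/q ≅ (ℤ/q)[x]/(x^n - θ)`. -/
abbrev Rq (n q : ℕ) (θ : ℤ) : Type :=
  AdjoinRoot ((Polynomial.X : Polynomial (ZMod q)) ^ n - Polynomial.C ((θ : ZMod q)))

/-- The image of `θ^{1/n}` in `Rq n q θ`. -/
noncomputable def rootq (n q : ℕ) (θ : ℤ) : Rq n q θ :=
  AdjoinRoot.root ((Polynomial.X : Polynomial (ZMod q)) ^ n - Polynomial.C ((θ : ZMod q)))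

open Polynomial

/-- `χ` does not factor through `R ⧸ I` for any nonzero ideal `I`. -/
def MulChar.IsPrimitive {R R' : Type*} [CommRing R] [CommRing R'] (χ : MulChar R R') : Prop :=
  ∀ I : Ideal R, I ≠ ⊥ → ∃ u : Rˣ, (u : R) - 1 ∈ I ∧ χ u ≠ 1

section GaussSum

variable {R : Type*} [CommRing R] [Fintype R]

theorem MulChar.norm_apply_unit (χ : MulChar R ℂ) (u : Rˣ) : ‖χ u‖ = 1 := by
  classical
  exact Complex.norm_eq_one_of_mem_rootsOfUnity (χ.apply_mem_rootsOfUnity u)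

theorem sum_eq_sum_units_of_not_isUnit [DecidableEq R] {M : Type*} [AddCommMonoid M]
    {f : R → M} (hf : ∀ x, ¬IsUnit x → f x = 0) : ∑ x, f x = ∑ u : Rˣ, f u :=
  (Fintype.sum_of_injective _ Units.val_injective _ _
    (fun x hx => hf x fun ⟨u, hu⟩ => hx ⟨u, hu⟩) fun _ => rfl).symm

theorem gaussSum_mulShift_eq_zero_of_not_isUnit {R' : Type*} [CommRing R'] [IsDomain R']
    {χ : MulChar R R'} (hχ : χ.IsPrimitive) (ψ : AddChar R R') {y : R} (hy : ¬IsUnit y) :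
    gaussSum χ (ψ.mulShift y) = 0 := by
  obtain ⟨z, hyz, hz⟩ : ∃ z, y * z = 0 ∧ z ≠ 0 := by
    simpa [isUnit_iff_mem_nonZeroDivisors_of_finite, mem_nonZeroDivisors_iff, mul_comm]
      using hy
  obtain ⟨u, hu, hχu⟩ := hχ (Ideal.span {z}) (by simpa using hz)
  obtain ⟨w, hw⟩ := Ideal.mem_span_singleton'.1 hu
  have hyu : y * u = y := by linear_combination w * hyz - y * hw
  have key := gaussSum_mulShift χ (ψ.mulShift y) u
  rw [AddChar.mulShift_mulShift, hyu] at key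
  have : (χ u - 1) * gaussSum χ (ψ.mulShift y) = 0 := by linear_combination key
  exact (mul_eq_zero.1 this).resolve_left (sub_ne_zero.2 hχu)

theorem norm_gaussSum_mulShift_unit (χ : MulChar R ℂ) (ψ : AddChar R ℂ) (u : Rˣ) :
    ‖gaussSum χ (ψ.mulShift u)‖ = ‖gaussSum χ ψ‖ := by
  rw [gaussSum_mulShift_eq, norm_mul, MulChar.norm_apply_unit, one_mul]

theorem MulChar.sum_norm_sq_apply (χ : MulChar R ℂ) : ∑ x, ‖χ x‖ ^ 2 = Nat.card Rˣ := by
  classical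
  rw [sum_eq_sum_units_of_not_isUnit fun x hx => by simp [χ.map_nonunit hx]]
  simp [MulChar.norm_apply_unit]

variable {ψ : AddChar R ℂ}

theorem sum_norm_sq_gaussSum_mulShift (hψ : ψ.IsPrimitive) (χ : MulChar R ℂ) :
    ∑ y, ‖gaussSum χ (ψ.mulShift y)‖ ^ 2 = Fintype.card R * ∑ x, ‖χ x‖ ^ 2 := by
  classical
  have hsum (x z : R) : ∑ y, ψ (y * x) * starRingEnd ℂ (ψ (y * z)) =
      if x = z then (Fintype.card R : ℂ) else 0 := by
    simp_rw [← AddChar.map_neg_eq_conj, ← AddChar.map_add_eq_mul, ← mul_neg, ← mul_add,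
      AddChar.sum_mulShift _ hψ, ← sub_eq_add_neg, sub_eq_zero]
    norm_cast
  apply Complex.ofReal_injective
  push_cast
  simp_rw [← Complex.mul_conj', gaussSum, AddChar.mulShift_apply, map_sum, map_mul,
    Finset.sum_mul_sum, Finset.mul_sum]
  calc ∑ y, ∑ x, ∑ z, χ x * ψ (y * x) * (starRingEnd ℂ (χ z) * starRingEnd ℂ (ψ (y * z)))
      = ∑ x, ∑ z, χ x * starRingEnd ℂ (χ z) *
          ∑ y, ψ (y * x) * starRingEnd ℂ (ψ (y * z)) := by
        rw [Finset.sum_comm]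
        refine Finset.sum_congr rfl fun x _ => ?_
        rw [Finset.sum_comm]
        simp_rw [Finset.mul_sum]
        refine Finset.sum_congr rfl fun z _ => Finset.sum_congr rfl fun y _ => by ring
    _ = _ := by
        simp only [hsum, mul_ite, mul_zero, Finset.sum_ite_eq, Finset.mem_univ, if_true]
        exact Finset.sum_congr rfl fun x _ => mul_comm _ _

theorem norm_sq_gaussSum (hψ : ψ.IsPrimitive) {χ : MulChar R ℂ} (hχ : χ.IsPrimitive) :
    ‖gaussSum χ ψ‖ ^ 2 = Fintype.card R := by
  classical
  have h := sum_norm_sq_gaussSum_mulShift hψ χ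
  rw [MulChar.sum_norm_sq_apply, sum_eq_sum_units_of_not_isUnit fun y hy => by
    simp [gaussSum_mulShift_eq_zero_of_not_isUnit hχ ψ hy]] at h
  simp only [norm_gaussSum_mulShift_unit, Finset.sum_const, Finset.card_univ, nsmul_eq_mul] at h
  rw [← Nat.card_eq_fintype_card (α := Rˣ)] at h
  have hunits : (0 : ℝ) < Nat.card Rˣ := by exact_mod_cast Nat.card_pos
  nlinarith

theorem norm_gaussSum_mulShift_le (hψ : ψ.IsPrimitive) {χ : MulChar R ℂ} (hχ : χ.IsPrimitive)
    (y : R) : ‖gaussSum χ (ψ.mulShift y)‖ ≤ √(Fintype.card R) := by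
  by_cases hy : IsUnit y
  · obtain ⟨u, rfl⟩ := hy
    rw [norm_gaussSum_mulShift_unit, ← norm_sq_gaussSum hψ hχ, Real.sqrt_sq (norm_nonneg _)]
  · simp [gaussSum_mulShift_eq_zero_of_not_isUnit hχ ψ hy]

theorem card_mul_sum_eq_sum_gaussSum_mulShift (χ : MulChar R ℂ) (L : AddSubgroup R)
    [Fintype L] {A : Finset R} (hA : ∀ x, x ∈ A ↔ ∀ y ∈ L, ψ (y * x) = 1) :
    Fintype.card L * ∑ x ∈ A, χ x = ∑ y : L, gaussSum χ (ψ.mulShift y) := by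
  classical
  have hsum (x : R) : ∑ y : L, ψ (y * x) = if x ∈ A then (Fintype.card L : ℂ) else 0 := by
    let ψx : AddChar L ℂ := ψ.compAddMonoidHom ((AddMonoidHom.mulRight x).comp L.subtype)
    have hψx : ψx = 0 ↔ x ∈ A := by simp [AddChar.eq_zero_iff, hA, ψx]
    change ∑ a, ψx a = _
    simp only [ψx.sum_eq_ite, hψx]
  simp_rw [gaussSum, AddChar.mulShift_apply]
  rw [Finset.sum_comm]
  simp_rw [← Finset.mul_sum, hsum, mul_ite, mul_zero, ← Finset.sum_filter, Finset.mul_sum]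
  simp [mul_comm]

theorem norm_sum_le_sqrt_card_of_annihilator (hψ : ψ.IsPrimitive) {χ : MulChar R ℂ}
    (hχ : χ.IsPrimitive) (L : AddSubgroup R) {A : Finset R}
    (hA : ∀ x, x ∈ A ↔ ∀ y ∈ L, ψ (y * x) = 1) :
    ‖∑ x ∈ A, χ x‖ ≤ √(Fintype.card R) := by
  classical
  have hL : (0 : ℝ) < Fintype.card L := by exact_mod_cast Fintype.card_pos
  have h := congrArg norm (card_mul_sum_eq_sum_gaussSum_mulShift χ L hA)
  rw [norm_mul, Complex.norm_natCast] at h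
  refine le_of_mul_le_mul_left ?_ hL
  calc Fintype.card L * ‖∑ x ∈ A, χ x‖ ≤ ∑ y : L, ‖gaussSum χ (ψ.mulShift y)‖ :=
        h ▸ norm_sum_le _ _
    _ ≤ ∑ _y : L, √(Fintype.card R) :=
        Finset.sum_le_sum fun y _ => norm_gaussSum_mulShift_le hψ hχ y
    _ = Fintype.card L * √(Fintype.card R) := by simp

end GaussSum

theorem Polynomial.degree_mul_lt_of_degree_lt {R : Type*} [Semiring R] {p r : R[X]} {a b : ℕ}
    (hp : p.degree < a) (hr : r.degree < b) : (p * r).degree < ↑(a + b - 1) := by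
  rw [degree_lt_iff_coeff_zero]
  intro m hm
  rw [coeff_mul]
  refine Finset.sum_eq_zero fun ⟨i, j⟩ hij => ?_
  rw [Finset.HasAntidiagonal.mem_antidiagonal] at hij
  rcases le_or_gt a i with hi | hi
  · rw [coeff_eq_zero_of_degree_lt (hp.trans_le (by exact_mod_cast hi)), zero_mul]
  · rw [coeff_eq_zero_of_degree_lt (hr.trans_le (by exact_mod_cast (by omega : b ≤ j))),
      mul_zero]

theorem sum_Icc_one_natCast {ι M : Type*} [Fintype ι] [DecidableEq ι] [AddCommMonoid M]
    {q : ℕ} [NeZero q] (g : (ι → ZMod q) → M) :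
    ∑ a ∈ Finset.Icc (1 : ι → ℕ) (fun _ => q), g (fun i => (a i : ZMod q)) = ∑ z, g z := by
  refine Finset.sum_nbij' (fun a i => (a i : ZMod q)) (fun z i => (z i - 1).val + 1)
    (fun _ _ => Finset.mem_univ _) (fun z _ => ?_) (fun a ha => ?_) (fun z _ => ?_)
    (fun _ _ => rfl)
  · simpa [Finset.mem_Icc, Pi.le_def] using fun i => ZMod.val_lt (z i - 1)
  · funext i
    have h1 : 1 ≤ a i := (Finset.mem_Icc.1 ha).1 i
    have h2 : a i ≤ q := (Finset.mem_Icc.1 ha).2 i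
    change ((a i : ZMod q) - 1).val + 1 = a i
    rw [← Nat.cast_one, ← Nat.cast_sub h1, ZMod.val_natCast_of_lt (by omega)]
    omega
  · funext i
    simp

theorem sqrt_pow_le_mul_pow {x ε : ℝ} (hx : 1 ≤ x) (hε : 0 < ε) (hεx : 1 ≤ ε ^ 2 * x)
    {n m : ℕ} (hnm : n < 2 * m) : √(x ^ n) ≤ ε * x ^ m := by
  rw [Real.sqrt_le_iff]
  refine ⟨by positivity, ?_⟩
  calc x ^ n ≤ x ^ n * (ε ^ 2 * x) := le_mul_of_one_le_right (by positivity) hεx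
    _ = ε ^ 2 * x ^ (n + 1) := by ring
    _ ≤ ε ^ 2 * x ^ (2 * m) := by gcongr; exact hnm
    _ = (ε * x ^ m) ^ 2 := by ring

namespace Rq

variable {n q : ℕ} {θ : ℤ}

noncomputable def toPoly (hn : n ≠ 0) : Rq n q θ →ₗ[ZMod q] (ZMod q)[X] :=
  AdjoinRoot.modByMonicHom (monic_X_pow_sub_C _ hn)

/-- The paper's truncated elements `∑_{i < d} aᵢ θ^{i/n}`. -/
noncomputable def truncation (hn : n ≠ 0) (d : ℕ) : Submodule (ZMod q) (Rq n q θ) :=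
  (degreeLT (ZMod q) d).comap (toPoly hn)

noncomputable def addChar [NeZero q] (hn : n ≠ 0) : AddChar (Rq n q θ) ℂ :=
  ZMod.stdAddChar.compAddMonoidHom ((lcoeff (ZMod q) (n - 1)).comp (toPoly hn)).toAddMonoidHom

section

variable (hn : n ≠ 0)
include hn

theorem mk_toPoly (x : Rq n q θ) : AdjoinRoot.mk _ (toPoly hn x) = x :=
  AdjoinRoot.mk_leftInverse _ x

theorem eq_zero_of_toPoly_eq_zero {x : Rq n q θ} (hx : toPoly hn x = 0) : x = 0 := by
  rw [← mk_toPoly hn x, hx, map_zero]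

theorem mem_truncation {d : ℕ} {x : Rq n q θ} :
    x ∈ truncation hn d ↔ (toPoly hn x).degree < d :=
  mem_degreeLT

theorem addChar_apply [NeZero q] (x : Rq n q θ) :
    addChar hn x = ZMod.stdAddChar ((toPoly hn x).coeff (n - 1)) :=
  rfl

variable [Fact (1 < q)]

theorem finite : Finite (Rq n q θ) :=
  have := (AdjoinRoot.powerBasis' (monic_X_pow_sub_C (θ : ZMod q) hn)).finite
  Module.finite_of_finite (ZMod q)

theorem natCard : Nat.card (Rq n q θ) = q ^ n := by
  let b := (AdjoinRoot.powerBasis' (monic_X_pow_sub_C (θ : ZMod q) hn)).basis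
  rw [Nat.card_congr b.equivFun.toEquiv, Nat.card_fun, Nat.card_zmod, Nat.card_eq_fintype_card,
    Fintype.card_fin, AdjoinRoot.powerBasis'_dim, natDegree_X_pow_sub_C]

theorem toPoly_mk_of_degree_lt {p : (ZMod q)[X]} (hp : p.degree < n) :
    toPoly (θ := θ) hn (AdjoinRoot.mk _ p) = p := by
  rw [toPoly, AdjoinRoot.modByMonicHom_mk, modByMonic_eq_self_iff (monic_X_pow_sub_C _ hn),
    degree_X_pow_sub_C (Nat.pos_of_ne_zero hn)]
  exact hp

theorem degree_toPoly_lt (x : Rq n q θ) : (toPoly hn x).degree < n := by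
  obtain ⟨p, rfl⟩ := AdjoinRoot.mk_surjective x
  rw [toPoly, AdjoinRoot.modByMonicHom_mk]
  exact (degree_modByMonic_lt p (monic_X_pow_sub_C _ hn)).trans_eq
    (degree_X_pow_sub_C (Nat.pos_of_ne_zero hn) _)

theorem toPoly_mul_of_degree_lt {x y : Rq n q θ} (h : (toPoly hn x * toPoly hn y).degree < n) :
    toPoly hn (x * y) = toPoly hn x * toPoly hn y := by
  conv_lhs => rw [← mk_toPoly hn x, ← mk_toPoly hn y, ← map_mul]
  exact toPoly_mk_of_degree_lt hn h

theorem toPoly_rootq_pow {m : ℕ} (hm : m < n) : toPoly hn (rootq n q θ ^ m) = X ^ m := by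
  rw [rootq, ← AdjoinRoot.mk_X, ← map_pow, toPoly_mk_of_degree_lt hn]
  rw [degree_X_pow]
  exact_mod_cast hm

theorem mem_truncation_iff_forall_addChar {d e : ℕ} (hde : d + e = n) {x : Rq n q θ} :
    x ∈ truncation hn d ↔ ∀ y ∈ truncation hn e, addChar hn (y * x) = 1 := by
  constructor
  · intro hx y hy
    rw [mem_truncation] at hx hy
    have hP := degree_mul_lt_of_degree_lt hy hx
    rw [addChar_apply, toPoly_mul_of_degree_lt hn (hP.trans_le (by exact_mod_cast (by omega))),
      coeff_eq_zero_of_degree_lt (hP.trans_le (by exact_mod_cast (by omega))),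
      AddChar.map_zero_eq_one]
  · contrapose!
    intro hx
    set p := toPoly hn x
    have hp : p ≠ 0 := fun h => hx (by simp [mem_truncation, p, h])
    have hdp : d ≤ p.natDegree := by
      by_contra! h
      exact hx ((mem_truncation hn).2 ((degree_le_natDegree).trans_lt (by exact_mod_cast h)))
    have hpn : p.natDegree < n := (natDegree_lt_iff_degree_lt hp).2 (degree_toPoly_lt hn x)
    -- the witness moves the leading term of `p` to the top coefficient, without wrapping around
    have hXp : (X ^ (n - 1 - p.natDegree) * p).degree < (n : WithBot ℕ) := by
      rw [mul_comm, (monic_X_pow _).degree_mul, degree_X_pow, degree_eq_natDegree hp]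
      exact_mod_cast (by omega)
    refine ⟨rootq n q θ ^ (n - 1 - p.natDegree), ?_, ?_⟩
    · rw [mem_truncation, toPoly_rootq_pow hn (by omega), degree_X_pow]
      exact_mod_cast (by omega)
    · rw [addChar_apply, toPoly_mul_of_degree_lt hn (by rwa [toPoly_rootq_pow hn (by omega)]),
        toPoly_rootq_pow hn (by omega), coeff_X_pow_mul', if_pos (by omega),
        show n - 1 - (n - 1 - p.natDegree) = p.natDegree by omega]
      exact fun h => leadingCoeff_ne_zero.2 hp
        (ZMod.injective_stdAddChar (h.trans (AddChar.map_zero_eq_one _).symm))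

theorem isPrimitive_addChar : (addChar (θ := θ) (q := q) hn).IsPrimitive := by
  intro x hx hψ
  have h0 : x ∈ truncation hn 0 := (mem_truncation_iff_forall_addChar hn (zero_add n)).2
    fun y _ => by rw [mul_comm, ← AddChar.mulShift_apply, hψ, AddChar.one_apply]
  rw [mem_truncation, Nat.cast_zero, Nat.WithBot.lt_zero_iff, degree_eq_bot] at h0
  exact hx (eq_zero_of_toPoly_eq_zero hn h0)

open Classical in
theorem sum_truncation {M : Type*} [AddCommMonoid M] [Fintype (Rq n q θ)] {d : ℕ} (hd : d ≤ n)
    (f : Rq n q θ → M) :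
    ∑ x with x ∈ truncation hn d, f x =
      ∑ z : Fin d → ZMod q, f (∑ i, algebraMap (ZMod q) _ (z i) * rootq n q θ ^ (i : ℕ)) := by
  let P (z : Fin d → ZMod q) : (ZMod q)[X] := (degreeLTEquiv (ZMod q) d).symm z
  have hmk (z : Fin d → ZMod q) :
      ∑ i, algebraMap (ZMod q) _ (z i) * rootq n q θ ^ (i : ℕ) = AdjoinRoot.mk _ (P z) := by
    simp [P, degreeLTEquiv, rootq, ← C_mul_X_pow_eq_monomial, AdjoinRoot.algebraMap_eq]
  have hP (z : Fin d → ZMod q) : toPoly hn (AdjoinRoot.mk _ (P z)) = P z :=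
    toPoly_mk_of_degree_lt (θ := θ) hn
      ((mem_degreeLT.1 (Subtype.prop _)).trans_le (by exact_mod_cast hd))
  have hinv {x : Rq n q θ} (hx : x ∈ truncation hn d) :
      AdjoinRoot.mk _ (P fun i => (toPoly hn x).coeff i) = x := by
    rw [show (fun i : Fin d => (toPoly hn x).coeff i) = degreeLTEquiv (ZMod q) d ⟨_, hx⟩ from rfl]
    simp only [P, LinearEquiv.symm_apply_apply, mk_toPoly]
  simp_rw [hmk]
  refine Finset.sum_nbij' (fun x i => (toPoly hn x).coeff i) (fun z => AdjoinRoot.mk _ (P z))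
    (fun _ _ => Finset.mem_univ _) (fun z _ => ?_) (fun x hx => hinv (by simpa using hx))
    (fun z _ => ?_) (fun x hx => by rw [hinv (by simpa using hx)])
  · simpa [mem_truncation, hP] using mem_degreeLT.1 (Subtype.prop _)
  · simp only [hP]
    exact (degreeLTEquiv (ZMod q) d).apply_symm_apply z

theorem norm_sum_Icc_le {χ : MulChar (Rq n q θ) ℂ} (hχ : χ.IsPrimitive) {d : ℕ} (hd : d ≤ n) :
    ‖∑ a ∈ Finset.Icc (1 : Fin d → ℕ) (fun _ => q),
        χ (∑ i, (a i : Rq n q θ) * rootq n q θ ^ (i : ℕ))‖ ≤ √((q : ℝ) ^ n) := by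
  classical
  have := finite (q := q) (θ := θ) hn
  let _ := Fintype.ofFinite (Rq n q θ)
  have hA (x : Rq n q θ) : x ∈ Finset.univ.filter (· ∈ truncation hn d) ↔
      ∀ y ∈ (truncation hn (n - d)).toAddSubgroup, addChar hn (y * x) = 1 := by
    simpa using mem_truncation_iff_forall_addChar hn (Nat.add_sub_cancel' hd)
  calc _ = ‖∑ x with x ∈ truncation hn d, χ x‖ := by
        rw [sum_truncation hn hd, ← sum_Icc_one_natCast]
        simp only [map_natCast]
    _ ≤ √(Fintype.card (Rq n q θ)) :=
        norm_sum_le_sqrt_card_of_annihilator (isPrimitive_addChar hn) hχ _ hA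
    _ = √((q : ℝ) ^ n) := by rw [Fintype.card_eq_nat_card, natCard hn]; push_cast; rfl

end

end Rq

theorem stmt_13_general (n k : ℕ) (hkn : 2 * k < n) (θ : ℤ) :
    ∀ ε : ℝ, 0 < ε → ∃ Q : ℕ, ∀ q : ℕ, Q ≤ q →
      ∀ χ : MulChar (Rq n q θ) ℂ,
        (∀ I : Ideal (Rq n q θ), I ≠ ⊥ →
          ∃ u : (Rq n q θ)ˣ, ((u : Rq n q θ) - 1) ∈ I ∧ χ (u : Rq n q θ) ≠ 1) →
        ∀ S : ℂ, S = ∑ a ∈ Finset.Icc (1 : Fin (n - k) → ℕ) (fun _ => q),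
            χ (∑ i, ((a i : Rq n q θ)) * (rootq n q θ) ^ (i : ℕ)) →
          ‖S‖ ≤ (q : ℝ) ^ n / Real.sqrt (Nat.card (Rq n q θ)ˣ)
          ∧ ‖S‖ ≤ (q : ℝ) ^ ((n : ℝ) / 2 + ε)
          ∧ ‖S‖ ≤ ε * (q : ℝ) ^ (n - k) := by
  intro ε hε
  refine ⟨max 2 ⌈(ε ^ 2)⁻¹⌉₊, fun q hq χ hχ S hS => ?_⟩
  have hn : n ≠ 0 := by omega
  have : Fact (1 < q) := ⟨le_of_max_le_left hq⟩
  have := Rq.finite (q := q) (θ := θ) hn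
  have hq1 : (1 : ℝ) ≤ q := by exact_mod_cast (le_of_max_le_left hq).trans' (by norm_num)
  have hεq : 1 ≤ ε ^ 2 * q := by
    rw [← inv_le_iff_one_le_mul₀' (by positivity)]
    exact (Nat.le_ceil _).trans (by exact_mod_cast le_of_max_le_right hq)
  have hunits : 0 < Nat.card (Rq n q θ)ˣ ∧ Nat.card (Rq n q θ)ˣ ≤ q ^ n :=
    ⟨Nat.card_pos,
      Rq.natCard (q := q) (θ := θ) hn ▸ Nat.card_le_card_of_injective _ Units.val_injective⟩
  have hS : ‖S‖ ≤ √((q : ℝ) ^ n) := hS ▸ Rq.norm_sum_Icc_le hn hχ (Nat.sub_le n k)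
  refine ⟨hS.trans ?_, hS.trans ?_, hS.trans (sqrt_pow_le_mul_pow hq1 hε hεq (by omega))⟩
  · rw [← Real.div_sqrt]
    exact div_le_div_of_nonneg_left (by positivity) (Real.sqrt_pos.2 (by exact_mod_cast hunits.1))
      (Real.sqrt_le_sqrt (by exact_mod_cast hunits.2))
  · rw [Real.sqrt_eq_rpow, ← Real.rpow_natCast, ← Real.rpow_mul (by positivity)]
    exact Real.rpow_le_rpow_of_exponent_le hq1 (by linarith)

/-- **Character sum over truncated elements.**  Let `K = ℚ(θ^{1/n})` with `x^n - θ`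
irreducible and `n > 2k`.  For a primitive multiplicative character `χ` of
`ℤ[θ^{1/n}]/qℤ[θ^{1/n}]`, the sum `S = ∑_{a ∈ [1,q]^{n-k}} χ(∑ aᵢ θ^{(i-1)/n})` satisfies
`|S| ≤ q^n / φ_K((q))^{1/2} ≤ q^{n/2+o(1)}`, and in particular `S = o(q^{n-k})` as
`q → ∞`. -/
theorem stmt_13 (n k : ℕ) (hk : 1 ≤ k) (hkn : 2 * k < n) (θ : ℤ)
    (hirr : Irreducible ((Polynomial.X : Polynomial ℚ) ^ n - Polynomial.C (θ : ℚ))) :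
    ∀ ε : ℝ, 0 < ε → ∃ Q : ℕ, ∀ q : ℕ, Q ≤ q →
      ∀ χ : MulChar (Rq n q θ) ℂ,
        (∀ I : Ideal (Rq n q θ), I ≠ ⊥ →
          ∃ u : (Rq n q θ)ˣ, ((u : Rq n q θ) - 1) ∈ I ∧ χ (u : Rq n q θ) ≠ 1) →
        ∀ S : ℂ, S = ∑ a ∈ Finset.Icc (1 : Fin (n - k) → ℕ) (fun _ => q),
            χ (∑ i, ((a i : Rq n q θ)) * (rootq n q θ) ^ (i : ℕ)) →
          ‖S‖ ≤ (q : ℝ) ^ n / Real.sqrt (Nat.card (Rq n q θ)ˣ)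
          ∧ ‖S‖ ≤ (q : ℝ) ^ ((n : ℝ) / 2 + ε)
          ∧ ‖S‖ ≤ ε * (q : ℝ) ^ (n - k) :=
  stmt_13_general n k hkn θ
end
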